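/- Let 𝓗₂ ⊂ ℝ² be the lattice generated by (1,0) and (1/2,1/2). Then the ℓ¹-covering radius of 𝓗₂ equals 1/2, i.e., sup_{y∈ℝ²} inf_{x∈𝓗₂} ‖y − x‖₁ = 1/2. -/

import Mathlib

/-!
In the rotated coordinates `s = x + y`, `t = x - y` the lattice `H2` becomes `ℤ²` and the
ℓ¹-norm becomes the ℓ∞-norm, since `|u| + |v| = max |u + v| |u - v|`. Rounding `s` and `t`
separately therefore finds a lattice point within distance `1/2`, and the point `(1/2, 0)`,
whose `s`-coordinate is a half-integer, is at distance exactly `1/2`.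
-/

/-- The planar lattice generated by `(1,0)` and `(1/2,1/2)`. -/
def H2 : Set (ℝ × ℝ) := {p | ∃ a b : ℤ, p = ((a : ℝ) + (b : ℝ)/2, (b : ℝ)/2)}

/-- ℓ¹-distance from `y` to the set `H2`. -/
noncomputable def distH2 (y : ℝ × ℝ) : ℝ :=
  sInf ((fun p => |y.1 - p.1| + |y.2 - p.2|) '' H2)

theorem abs_add_abs_eq_max_abs_add_abs_sub {α : Type*} [AddCommGroup α] [LinearOrder α]
    [IsOrderedAddMonoid α] (a b : α) : |a| + |b| = max |a + b| |a - b| := by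
  refine le_antisymm ?_ (max_le (abs_add_le a b) (abs_sub a b))
  rcases le_total 0 a with ha | ha <;> rcases le_total 0 b with hb | hb
  · rw [abs_of_nonneg ha, abs_of_nonneg hb]
    exact le_max_of_le_left (le_abs_self _)
  · rw [abs_of_nonneg ha, abs_of_nonpos hb, ← sub_eq_add_neg]
    exact le_max_of_le_right (le_abs_self _)
  · rw [abs_of_nonpos ha, abs_of_nonneg hb, neg_add_eq_sub, abs_sub_comm]
    exact le_max_of_le_right (le_abs_self _)
  · rw [abs_of_nonpos ha, abs_of_nonpos hb, ← neg_add]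
    exact le_max_of_le_left (neg_le_abs _)

theorem mem_H2_iff {p : ℝ × ℝ} : p ∈ H2 ↔ ∃ m n : ℤ, p.1 + p.2 = m ∧ p.1 - p.2 = n := by
  constructor
  · rintro ⟨a, b, rfl⟩
    exact ⟨a + b, a, by push_cast; ring, by ring⟩
  · rintro ⟨m, n, hm, hn⟩
    refine ⟨n, m - n, Prod.ext ?_ ?_⟩ <;> push_cast <;> linarith

theorem l1_dist_eq_max (y p : ℝ × ℝ) :
    |y.1 - p.1| + |y.2 - p.2| = max |(y.1 + y.2) - (p.1 + p.2)| |(y.1 - y.2) - (p.1 - p.2)| := by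
  rw [abs_add_abs_eq_max_abs_add_abs_sub]
  ring_nf

theorem half_le_abs_half_sub_intCast {α : Type*} [Field α] [LinearOrder α] [IsStrictOrderedRing α]
    [FloorRing α] (k : ℤ) : (1/2 : α) ≤ |1/2 - (k : α)| :=
  calc (1/2 : α) = |1/2 - (round (1/2 : α) : α)| := by rw [one_div, round_two_inv]; norm_num
    _ ≤ |1/2 - (k : α)| := round_le _ _

theorem l1_dist_image_H2_bddBelow (y : ℝ × ℝ) :
    BddBelow ((fun p => |y.1 - p.1| + |y.2 - p.2|) '' H2) :=
  ⟨0, by rintro r ⟨p, -, rfl⟩; positivity⟩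

theorem distH2_le_half (y : ℝ × ℝ) : distH2 y ≤ 1/2 := by
  set m := round (y.1 + y.2)
  set n := round (y.1 - y.2)
  set p : ℝ × ℝ := (((m : ℝ) + n) / 2, ((m : ℝ) - n) / 2)
  have hp : p ∈ H2 := mem_H2_iff.2 ⟨m, n, by simp only [p]; ring, by simp only [p]; ring⟩
  calc distH2 y ≤ |y.1 - p.1| + |y.2 - p.2| :=
        csInf_le (l1_dist_image_H2_bddBelow y) (Set.mem_image_of_mem _ hp)
    _ = max |(y.1 + y.2) - m| |(y.1 - y.2) - n| := by
        rw [l1_dist_eq_max]; simp only [p]; ring_nf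
    _ ≤ 1/2 := max_le (abs_sub_round _) (abs_sub_round _)

theorem distH2_half_zero : distH2 (1/2, 0) = 1/2 := by
  have h0 : ((0 : ℝ), (0 : ℝ)) ∈ H2 := ⟨0, 0, by simp⟩
  refine le_antisymm (distH2_le_half _) (le_csInf ⟨_, Set.mem_image_of_mem _ h0⟩ ?_)
  rintro r ⟨p, hp, rfl⟩
  obtain ⟨m, -, hm, -⟩ := mem_H2_iff.1 hp
  calc (1/2 : ℝ) ≤ |(1/2 : ℝ) - m| := half_le_abs_half_sub_intCast m
    _ ≤ _ := by
      rw [← hm]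
      exact (le_max_left _ _).trans_eq (by simpa using (l1_dist_eq_max (1/2, 0) p).symm)

theorem stmt8 : sSup (Set.range distH2) = 1/2 :=
  IsGreatest.csSup_eq ⟨⟨_, distH2_half_zero⟩, by rintro r ⟨y, rfl⟩; exact distH2_le_half y⟩
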